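/- arXiv:0712.2816 — 6 statements merged into one kernel-verified Lean document; each statement's English description precedes it below -/
import Mathlib

section
/- For every even natural number r ≥ 2, the square of the double factorial satisfies r!·√(r+1) ≤ (r!!)² ≤ r!·√(2r). -/
/-! Write `r = 2k + 2`, so that `r! = r‼ · (r - 1)‼`; both bounds then amount to
`(r + 1) · ((r - 1)‼)² ≤ (r‼)² ≤ 2r · ((r - 1)‼)²`. Both follow by induction on `k`: passing from
`r` to `r + 2` multiplies `(r‼)²` by `(r + 2)²` and `((r - 1)‼)²` by `(r + 1)²`, and the inductive
steps reduce to `(x - 1)(x + 1) ≤ x²` for `x = r + 2` and `x = r + 1` respectively. -/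

open Nat

namespace Nat

theorem mul_sq_doubleFactorial_odd_le_sq (k : ℕ) :
    (2 * k + 3) * ((2 * k + 1)‼) ^ 2 ≤ ((2 * k + 2)‼) ^ 2 := by
  induction k with
  | zero => simp [doubleFactorial]
  | succ k ih =>
    rw [show 2 * (k + 1) + 2 = 2 * k + 2 + 2 by ring, show 2 * (k + 1) + 1 = 2 * k + 1 + 2 by ring,
      doubleFactorial_add_two (2 * k + 2), doubleFactorial_add_two (2 * k + 1)]
    have step : (2 * k + 5) * (2 * k + 3) ≤ (2 * k + 4) ^ 2 := by nlinarith
    calc (2 * (k + 1) + 3) * ((2 * k + 3) * (2 * k + 1)‼) ^ 2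
        = (2 * k + 5) * (2 * k + 3) * ((2 * k + 3) * ((2 * k + 1)‼) ^ 2) := by ring
      _ ≤ (2 * k + 4) ^ 2 * ((2 * k + 2)‼) ^ 2 := Nat.mul_le_mul step ih
      _ = ((2 * (k + 1) + 2) * (2 * k + 2)‼) ^ 2 := by ring

theorem sq_doubleFactorial_even_le_mul_sq (k : ℕ) :
    ((2 * k + 2)‼) ^ 2 ≤ 2 * (2 * k + 2) * ((2 * k + 1)‼) ^ 2 := by
  induction k with
  | zero => simp [doubleFactorial]
  | succ k ih =>
    rw [show 2 * (k + 1) + 2 = 2 * k + 2 + 2 by ring, show 2 * (k + 1) + 1 = 2 * k + 1 + 2 by ring,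
      doubleFactorial_add_two (2 * k + 2), doubleFactorial_add_two (2 * k + 1)]
    have step : (2 * k + 4) * (2 * k + 2) ≤ (2 * k + 3) ^ 2 := by nlinarith
    calc ((2 * (k + 1) + 2) * (2 * k + 2)‼) ^ 2
        = (2 * k + 4) ^ 2 * ((2 * k + 2)‼) ^ 2 := by ring
      _ ≤ (2 * k + 4) ^ 2 * (2 * (2 * k + 2) * ((2 * k + 1)‼) ^ 2) := Nat.mul_le_mul_left _ ih
      _ = 2 * (2 * k + 4) * ((2 * k + 4) * (2 * k + 2)) * ((2 * k + 1)‼) ^ 2 := by ring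
      _ ≤ 2 * (2 * k + 4) * (2 * k + 3) ^ 2 * ((2 * k + 1)‼) ^ 2 := by gcongr
      _ = 2 * (2 * (k + 1) + 2) * ((2 * k + 3) * (2 * k + 1)‼) ^ 2 := by ring

end Nat

namespace Real

theorem sqrt_mul_le_of_mul_sq_le_sq {a b c : ℝ} (hb : 0 ≤ b) (hc : 0 ≤ c)
    (h : a * b ^ 2 ≤ c ^ 2) : √a * b ≤ c := by
  simpa [sqrt_mul' a (sq_nonneg b), sqrt_sq hb, sqrt_sq hc] using sqrt_le_sqrt h

theorem le_sqrt_mul_of_sq_le_mul_sq {a b c : ℝ} (hb : 0 ≤ b) (hc : 0 ≤ c)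
    (h : c ^ 2 ≤ a * b ^ 2) : c ≤ √a * b := by
  simpa [sqrt_mul' a (sq_nonneg b), sqrt_sq hb, sqrt_sq hc] using sqrt_le_sqrt h

end Real

theorem doubleFactorial_sq_even (r : ℕ) (hr : 2 ≤ r) (hre : Even r) :
    (r ! : ℝ) * Real.sqrt (r + 1) ≤ ((r‼ : ℝ)) ^ 2 ∧
      ((r‼ : ℝ)) ^ 2 ≤ (r ! : ℝ) * Real.sqrt (2 * r) := by
  obtain ⟨k, rfl⟩ : ∃ k, r = 2 * k + 2 := by
    obtain ⟨m, rfl⟩ := hre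
    exact ⟨m - 1, by omega⟩
  have hfac : ((2 * k + 2)! : ℝ) = ((2 * k + 2)‼ : ℕ) * ((2 * k + 1)‼ : ℕ) := by
    exact_mod_cast factorial_eq_mul_doubleFactorial (2 * k + 1)
  have lower : ((2 * k + 2 : ℕ) + 1 : ℝ) * (((2 * k + 1)‼ : ℕ) : ℝ) ^ 2
      ≤ (((2 * k + 2)‼ : ℕ) : ℝ) ^ 2 := by
    exact_mod_cast mul_sq_doubleFactorial_odd_le_sq k
  have upper : (((2 * k + 2)‼ : ℕ) : ℝ) ^ 2
      ≤ 2 * ((2 * k + 2 : ℕ) : ℝ) * (((2 * k + 1)‼ : ℕ) : ℝ) ^ 2 := by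
    exact_mod_cast sq_doubleFactorial_even_le_mul_sq k
  set e : ℝ := (((2 * k + 2)‼ : ℕ) : ℝ)
  set o : ℝ := (((2 * k + 1)‼ : ℕ) : ℝ)
  have he : 0 ≤ e := Nat.cast_nonneg _
  have ho : 0 ≤ o := Nat.cast_nonneg _
  rw [hfac]
  constructor
  · calc e * o * √((2 * k + 2 : ℕ) + 1) = e * (√((2 * k + 2 : ℕ) + 1) * o) := by ring
      _ ≤ e * e := by gcongr; exact Real.sqrt_mul_le_of_mul_sq_le_sq ho he lower
      _ = e ^ 2 := (sq e).symm
  · calc e ^ 2 = e * e := sq e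
      _ ≤ e * (√(2 * (2 * k + 2 : ℕ)) * o) := by
          gcongr; exact Real.le_sqrt_mul_of_sq_le_mul_sq ho he upper
      _ = e * o * √(2 * (2 * k + 2 : ℕ)) := by ring
end

section
/- For every odd natural number r ≥ 1, the square of the double factorial satisfies r!·√((r+1)/2) ≤ (r!!)² ≤ r!·√r. -/
open Nat

lemma aux_nat (k : ℕ) :
    (2 * k + 1)! ^ 2 * (2 * k + 2) ≤ 2 * ((2 * k + 1)‼) ^ 4 ∧
      ((2 * k + 1)‼) ^ 4 ≤ (2 * k + 1)! ^ 2 * (2 * k + 1) := by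
  induction k with
  | zero => decide
  | succ n ih =>
    obtain ⟨ih1, ih2⟩ := ih
    have h1 : (2 * (n + 1) + 1)! = (2 * n + 3) * ((2 * n + 2) * (2 * n + 1)!) := by
      have : 2 * (n + 1) + 1 = (2 * n + 1) + 1 + 1 := by ring
      rw [this, Nat.factorial_succ, Nat.factorial_succ]
    have h2 : (2 * (n + 1) + 1)‼ = (2 * n + 3) * (2 * n + 1)‼ := by
      have : 2 * (n + 1) + 1 = (2 * n + 1) + 2 := by ring
      rw [this, Nat.doubleFactorial]
    constructor
    · rw [h1, h2]
      nlinarith [Nat.mul_le_mul_left ((2 * n + 3) ^ 4) ih1, sq_nonneg ((2 * n + 1)!)]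
    · rw [h1, h2]
      calc ((2 * n + 3) * (2 * n + 1)‼) ^ 4
          = (2 * n + 3) ^ 4 * (2 * n + 1)‼ ^ 4 := by ring
        _ ≤ (2 * n + 3) ^ 4 * ((2 * n + 1)! ^ 2 * (2 * n + 1)) :=
            Nat.mul_le_mul_left _ ih2
        _ = (2 * n + 1)! ^ 2 * ((2 * n + 3) ^ 4 * (2 * n + 1)) := by ring
        _ ≤ (2 * n + 1)! ^ 2 * ((2 * n + 3) ^ 2 * (2 * n + 2) ^ 2 * (2 * n + 3)) :=
            Nat.mul_le_mul_left _ (by nlinarith)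
        _ = ((2 * n + 3) * ((2 * n + 2) * (2 * n + 1)!)) ^ 2 * (2 * (n + 1) + 1) := by ring

theorem doubleFactorial_sq_odd (r : ℕ) (hr : 1 ≤ r) (hro : Odd r) :
    (r ! : ℝ) * Real.sqrt ((r + 1) / 2) ≤ ((r‼ : ℝ)) ^ 2 ∧
      ((r‼ : ℝ)) ^ 2 ≤ (r ! : ℝ) * Real.sqrt r := by
  obtain ⟨k, hk⟩ := hro
  subst hk
  obtain ⟨A, B⟩ := aux_nat k
  have hA : ((2 * k + 1)! : ℝ) ^ 2 * (2 * k + 2) ≤ 2 * ((2 * k + 1)‼ : ℝ) ^ 4 := by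
    exact_mod_cast A
  have hB : ((2 * k + 1)‼ : ℝ) ^ 4 ≤ ((2 * k + 1)! : ℝ) ^ 2 * (2 * k + 1) := by
    exact_mod_cast B
  have hf : (0 : ℝ) ≤ ((2 * k + 1)! : ℝ) := by positivity
  have hd : (0 : ℝ) ≤ ((2 * k + 1)‼ : ℝ) := by positivity
  have hx : (0 : ℝ) ≤ ((2 * k + 1 : ℕ) + 1) / 2 := by positivity
  have hy : (0 : ℝ) ≤ ((2 * k + 1 : ℕ) : ℝ) := by positivity
  constructor
  · have key : ((2 * k + 1)! * Real.sqrt (((2 * k + 1 : ℕ) + 1) / 2)) ^ 2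
        ≤ (((2 * k + 1)‼ : ℝ) ^ 2) ^ 2 := by
      rw [mul_pow, Real.sq_sqrt hx]
      push_cast
      nlinarith [hA]
    have := (pow_le_pow_iff_left₀ (by positivity) (by positivity) (two_ne_zero)).mp key
    exact this
  · have key : (((2 * k + 1)‼ : ℝ) ^ 2) ^ 2
        ≤ ((2 * k + 1)! * Real.sqrt ((2 * k + 1 : ℕ))) ^ 2 := by
      rw [mul_pow, Real.sq_sqrt hy]
      push_cast
      nlinarith [hB]
    exact (pow_le_pow_iff_left₀ (by positivity) (by positivity) (two_ne_zero)).mp key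
end

section
/- For every natural number r ≥ 1, r^{1/4}·2^{-(r-1)/2}·√((r-1)!) ≤ Γ((r+1)/2) ≤ √(π/2)·r^{1/4}·2^{-(r-1)/2}·√((r-1)!). -/
/-!
By Legendre's duplication formula, `Γ((x+1)/2) Γ(x/2) = √π 2^(1-x) Γ(x)`, and log-convexity of `Γ`
(Gautschi's inequality) traps the ratio `ρ = Γ((x+1)/2) / Γ(x/2)` between `(x/2) / √((x+1)/2)` and
`√(x/2)`. Hence `Γ((x+1)/2)⁴ = π ρ² (2^(1-x) Γ(x))²`, to be compared with the fourth power
`x (2^(1-x) Γ(x))²` of the claimed bound. The upper bound needs `2 ≤ π`, the lower one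
`2 (x+1) ≤ π x`, which holds for `x ≥ 2`; at `r = 1` both sides of the lower bound equal `1`.
-/

namespace Real

theorem Gamma_midpoint_sq_le {a b : ℝ} (ha : 0 < a) (hb : 0 < b) :
    Gamma ((a + b) / 2) ^ 2 ≤ Gamma a * Gamma b := by
  have h := Gamma_mul_add_mul_le_rpow_Gamma_mul_rpow_Gamma ha hb one_half_pos one_half_pos
    (add_halves 1)
  rw [← sqrt_eq_rpow, ← sqrt_eq_rpow, ← sqrt_mul (Gamma_pos_of_pos ha).le,
    show 1 / 2 * a + 1 / 2 * b = (a + b) / 2 by ring] at h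
  exact (le_sqrt (Gamma_pos_of_pos (by positivity)).le
    (mul_pos (Gamma_pos_of_pos ha) (Gamma_pos_of_pos hb)).le).1 h

theorem Gamma_add_half_sq_le {s : ℝ} (hs : 0 < s) :
    Gamma (s + 1 / 2) ^ 2 ≤ s * Gamma s ^ 2 := by
  have h := Gamma_midpoint_sq_le hs (by linarith : 0 < s + 1)
  rwa [show (s + (s + 1)) / 2 = s + 1 / 2 by ring, Gamma_add_one hs.ne', mul_left_comm,
    ← sq] at h

theorem sq_mul_Gamma_sq_le_mul_Gamma_add_half_sq {s : ℝ} (hs : 0 < s) :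
    s ^ 2 * Gamma s ^ 2 ≤ (s + 1 / 2) * Gamma (s + 1 / 2) ^ 2 := by
  have h := Gamma_midpoint_sq_le (by linarith : 0 < s + 1 / 2) (by linarith : 0 < s + 1 / 2 + 1)
  rwa [show (s + 1 / 2 + (s + 1 / 2 + 1)) / 2 = s + 1 by ring, Gamma_add_one hs.ne',
    Gamma_add_one (by linarith : s + 1 / 2 ≠ 0), mul_left_comm, ← sq, mul_pow] at h

theorem Gamma_add_one_div_two_sq_mul_Gamma_div_two_sq (x : ℝ) :
    Gamma ((x + 1) / 2) ^ 2 * Gamma (x / 2) ^ 2 = π * (2 ^ (1 - x) * Gamma x) ^ 2 := by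
  have h := Gamma_mul_Gamma_add_half (x / 2)
  rw [show x / 2 + 1 / 2 = (x + 1) / 2 by ring, show 2 * (x / 2) = x by ring] at h
  rw [← mul_pow, mul_comm, h, mul_pow, sq_sqrt pi_pos.le]
  ring

theorem Gamma_add_one_div_two_pow_four_le {x : ℝ} (hx : 0 < x) :
    Gamma ((x + 1) / 2) ^ 4 ≤ x / 2 * π * (2 ^ (1 - x) * Gamma x) ^ 2 := by
  have h := Gamma_add_half_sq_le (half_pos hx)
  rw [show x / 2 + 1 / 2 = (x + 1) / 2 by ring] at h
  calc Gamma ((x + 1) / 2) ^ 4 = Gamma ((x + 1) / 2) ^ 2 * Gamma ((x + 1) / 2) ^ 2 := by ring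
    _ ≤ Gamma ((x + 1) / 2) ^ 2 * (x / 2 * Gamma (x / 2) ^ 2) := by gcongr
    _ = x / 2 * π * (2 ^ (1 - x) * Gamma x) ^ 2 := by
      rw [mul_left_comm, Gamma_add_one_div_two_sq_mul_Gamma_div_two_sq, mul_assoc]

theorem le_mul_Gamma_add_one_div_two_pow_four {x : ℝ} (hx : 0 < x) :
    (x / 2) ^ 2 * π * (2 ^ (1 - x) * Gamma x) ^ 2 ≤ (x + 1) / 2 * Gamma ((x + 1) / 2) ^ 4 := by
  have h := sq_mul_Gamma_sq_le_mul_Gamma_add_half_sq (half_pos hx)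
  rw [show x / 2 + 1 / 2 = (x + 1) / 2 by ring] at h
  calc (x / 2) ^ 2 * π * (2 ^ (1 - x) * Gamma x) ^ 2
      = Gamma ((x + 1) / 2) ^ 2 * ((x / 2) ^ 2 * Gamma (x / 2) ^ 2) := by
        rw [mul_assoc, ← Gamma_add_one_div_two_sq_mul_Gamma_div_two_sq]; ring
    _ ≤ Gamma ((x + 1) / 2) ^ 2 * ((x + 1) / 2 * Gamma ((x + 1) / 2) ^ 2) := by gcongr
    _ = (x + 1) / 2 * Gamma ((x + 1) / 2) ^ 4 := by ring

theorem rpow_one_div_four_mul_two_rpow_mul_sqrt_pow_four {x y : ℝ} (hx : 0 ≤ x) (hy : 0 ≤ y) :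
    (x ^ ((1 : ℝ) / 4) * (2 : ℝ) ^ (-((x - 1) / 2)) * √y) ^ 4 = x * (2 ^ (1 - x) * y) ^ 2 := by
  have h₁ : (x ^ ((1 : ℝ) / 4)) ^ 4 = x := by
    rw [← rpow_natCast, ← rpow_mul hx]; norm_num
  have h₂ : ((2 : ℝ) ^ (-((x - 1) / 2))) ^ 4 = ((2 : ℝ) ^ (1 - x)) ^ 2 := by
    rw [← rpow_natCast, ← rpow_mul zero_le_two, ← rpow_natCast, ← rpow_mul zero_le_two]
    congr 1; push_cast; ring
  have h₃ : √y ^ 4 = y ^ 2 := by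
    rw [show 4 = 2 * 2 by rfl, pow_mul, sq_sqrt hy]
  rw [mul_pow, mul_pow, h₁, h₂, h₃, mul_pow, mul_assoc]

theorem Gamma_add_one_div_two_le {x : ℝ} (hx : 0 < x) :
    Gamma ((x + 1) / 2)
      ≤ √(π / 2) * x ^ ((1 : ℝ) / 4) * (2 : ℝ) ^ (-((x - 1) / 2)) * √(Gamma x) := by
  have h_sqrt : √(π / 2) ^ 4 = (π / 2) ^ 2 := by
    rw [show 4 = 2 * 2 by rfl, pow_mul, sq_sqrt (by positivity)]
  rw [← pow_le_pow_iff_left₀ (Gamma_pos_of_pos (by linarith)).le (by positivity) four_ne_zero,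
    mul_assoc (√(π / 2)), mul_assoc (√(π / 2)), mul_pow, h_sqrt,
    rpow_one_div_four_mul_two_rpow_mul_sqrt_pow_four hx.le (Gamma_pos_of_pos hx).le]
  set D := 2 ^ (1 - x) * Gamma x
  have h_pi : 0 ≤ π / 4 * (π - 2) * x * D ^ 2 := by
    have := sub_nonneg.2 two_le_pi
    positivity
  calc Gamma ((x + 1) / 2) ^ 4 ≤ x / 2 * π * D ^ 2 := Gamma_add_one_div_two_pow_four_le hx
    _ ≤ (π / 2) ^ 2 * (x * D ^ 2) := by linarith

theorem le_Gamma_add_one_div_two {x : ℝ} (hx : 2 ≤ (π - 2) * x) :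
    x ^ ((1 : ℝ) / 4) * (2 : ℝ) ^ (-((x - 1) / 2)) * √(Gamma x) ≤ Gamma ((x + 1) / 2) := by
  have hx₀ : 0 < x := by
    have := pi_gt_three
    nlinarith
  set D := 2 ^ (1 - x) * Gamma x
  rw [← pow_le_pow_iff_left₀ (by positivity) (Gamma_pos_of_pos (by linarith)).le four_ne_zero,
    rpow_one_div_four_mul_two_rpow_mul_sqrt_pow_four hx₀.le (Gamma_pos_of_pos hx₀).le]
  refine le_of_mul_le_mul_left ?_ (by positivity : 0 < (x + 1) / 2)
  calc (x + 1) / 2 * (x * D ^ 2) ≤ (x / 2) ^ 2 * π * D ^ 2 := by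
        have := mul_le_mul_of_nonneg_right hx (by positivity : 0 ≤ x / 4 * D ^ 2)
        linarith
    _ ≤ (x + 1) / 2 * Gamma ((x + 1) / 2) ^ 4 := le_mul_Gamma_add_one_div_two_pow_four hx₀

end Real

open Nat

theorem gamma_half_bounds (r : ℕ) (hr : 1 ≤ r) :
    (r : ℝ) ^ ((1 : ℝ) / 4) * (2 : ℝ) ^ (-(((r : ℝ) - 1) / 2)) * Real.sqrt ((r - 1)! : ℝ)
      ≤ Real.Gamma (((r : ℝ) + 1) / 2) ∧
    Real.Gamma (((r : ℝ) + 1) / 2)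
      ≤ Real.sqrt (Real.pi / 2) * (r : ℝ) ^ ((1 : ℝ) / 4) * (2 : ℝ) ^ (-(((r : ℝ) - 1) / 2))
          * Real.sqrt ((r - 1)! : ℝ) := by
  have h_fac : ((r - 1)! : ℝ) = Real.Gamma r := by
    obtain ⟨n, rfl⟩ := Nat.exists_eq_add_of_le' hr
    simp [Real.Gamma_nat_eq_factorial]
  rw [h_fac]
  refine ⟨?_, Real.Gamma_add_one_div_two_le (by positivity)⟩
  rcases hr.eq_or_lt with rfl | hr₂
  · norm_num
  · apply Real.le_Gamma_add_one_div_two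
    have : (2 : ℝ) ≤ r := by exact_mod_cast hr₂
    nlinarith [Real.pi_gt_three]
end

section
/- Let O_m = 2π^{(m+1)/2}/Γ((m+1)/2) denote the m-dimensional volume of the unit sphere S^m. Then for all m ≥ 1, 2·O_{m-1}/O_m ≤ √m. -/
/-!
Log-convexity of `Γ` on `(0, ∞)` gives `Γ(x + 1/2) ≤ √(Γ(x) Γ(x + 1)) = √x Γ(x)`. With `x = m/2`
the ratio `2 O_{m-1} / O_m = 2 Γ(x + 1/2) / (√π Γ(x))` is therefore at most `√(2m/π) ≤ √m`.
-/

/-- The m-dimensional volume of the unit sphere `S^m ⊆ ℝ^{m+1}`. -/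
noncomputable def sphereVol (m : ℕ) : ℝ :=
  2 * Real.pi ^ (((m : ℝ) + 1) / 2) / Real.Gamma (((m : ℝ) + 1) / 2)

open Real

theorem Real.Gamma_add_half_le_sqrt_mul_Gamma {x : ℝ} (hx : 0 < x) :
    Gamma (x + 1 / 2) ≤ √x * Gamma x := by
  have hconv := Gamma_mul_add_mul_le_rpow_Gamma_mul_rpow_Gamma hx (by linarith : 0 < x + 1)
    one_half_pos one_half_pos (add_halves 1)
  rw [Gamma_add_one hx.ne', ← sqrt_eq_rpow, ← sqrt_eq_rpow, sqrt_mul hx.le,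
    mul_left_comm, mul_self_sqrt (Gamma_pos_of_pos hx).le] at hconv
  convert hconv using 2
  ring

theorem two_mul_sphereVol_div_sphereVol_succ (n : ℕ) :
    2 * sphereVol n / sphereVol (n + 1) =
      2 * Gamma ((n + 1) / 2 + 1 / 2) / (√π * Gamma ((n + 1) / 2)) := by
  have hshift : ((n + 1 : ℕ) + 1 : ℝ) / 2 = (n + 1) / 2 + 1 / 2 := by push_cast; ring
  rw [sphereVol, sphereVol, hshift, rpow_add pi_pos, ← sqrt_eq_rpow]
  have := (Gamma_pos_of_pos (by positivity : (0 : ℝ) < (n + 1) / 2 + 1 / 2)).ne'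
  have := (rpow_pos_of_pos pi_pos ((n + 1 : ℝ) / 2)).ne'
  have := (sqrt_pos.mpr pi_pos).ne'
  field_simp

theorem sphereVol_ratio_le_sqrt (m : ℕ) (hm : 1 ≤ m) :
    2 * sphereVol (m - 1) / sphereVol m ≤ Real.sqrt m := by
  obtain ⟨n, rfl⟩ := Nat.exists_eq_add_of_le' hm
  set x : ℝ := (n + 1) / 2 with hx_def
  have hx : 0 < x := by positivity
  rw [Nat.add_sub_cancel, two_mul_sphereVol_div_sphereVol_succ]
  calc 2 * Gamma (x + 1 / 2) / (√π * Gamma x)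
      ≤ 2 * (√x * Gamma x) / (√π * Gamma x) := by
        gcongr; exact Gamma_add_half_le_sqrt_mul_Gamma hx
    _ = √(2 / π) * √(2 * x) := by
        rw [← sqrt_mul (by positivity), show 2 / π * (2 * x) = 2 ^ 2 * x / π by ring,
          sqrt_div' _ pi_pos.le, sqrt_mul (by positivity), sqrt_sq zero_le_two]
        field_simp
    _ ≤ 1 * √(2 * x) := by
        gcongr
        rw [sqrt_le_one, div_le_one pi_pos]
        exact two_le_pi
    _ = √(n + 1 : ℕ) := by
        rw [one_mul, hx_def]; push_cast; ring_nf
end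

section
/- Fix m ≥ 1 and set T := ∑_{n=m+1}^∞ 2^{1-n} ∑_{k=0}^m C(n-1,k). Then T ≤ 2m + 1. -/
/-!
Exchanging the two sums, the contribution of each `k` is a tail of `∑_r C(r, k) 2^{-r} = 2`, so
it is at most `2`; for `k = 0` it is the geometric tail `2^{1-m} ≤ 1`.
-/

open Finset

lemma hasSum_choose_mul_geometric {𝕜 : Type*} [NormedField 𝕜] [CompleteSpace 𝕜] (k : ℕ) {x : 𝕜}
    (hx : ‖x‖ < 1) :
    HasSum (fun n ↦ (n.choose k : 𝕜) * x ^ n) (x ^ k / (1 - x) ^ (k + 1)) := by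
  rw [← hasSum_nat_add_iff' k]
  have hvanish : ∑ i ∈ range k, (i.choose k : 𝕜) * x ^ i = 0 :=
    sum_eq_zero fun i hi ↦ by simp [Nat.choose_eq_zero_of_lt (mem_range.mp hi)]
  rw [hvanish, sub_zero, div_eq_mul_one_div]
  exact ((hasSum_choose_mul_geometric_of_norm_lt_one k hx).mul_left (x ^ k)).congr_fun
    fun n ↦ by rw [pow_add]; ring

lemma hasSum_choose_mul_half_pow (k : ℕ) :
    HasSum (fun n ↦ (n.choose k : ℝ) * (1 / 2) ^ n) 2 := by
  have h := hasSum_choose_mul_geometric k (x := (1 / 2 : ℝ)) (by norm_num)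
  rwa [show (1 / 2 : ℝ) ^ k / (1 - 1 / 2) ^ (k + 1) = 2 by rw [pow_succ]; field_simp; norm_num] at h

lemma tsum_choose_mul_half_pow_nat_add_le (k m : ℕ) :
    ∑' n, ((n + m).choose k : ℝ) * (1 / 2) ^ (n + m) ≤ 2 :=
  (tsum_comp_le_tsum_of_inj (hasSum_choose_mul_half_pow k).summable (fun _ ↦ by positivity)
    (add_left_injective m)).trans_eq (hasSum_choose_mul_half_pow k).tsum_eq

lemma tsum_half_pow_nat_add_le_one {m : ℕ} (hm : 1 ≤ m) : ∑' n, (1 / 2 : ℝ) ^ (n + m) ≤ 1 := by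
  simp_rw [pow_add, tsum_mul_right, tsum_geometric_two]
  have : (1 / 2 : ℝ) ^ m ≤ 1 / 2 := pow_le_of_le_one (by norm_num) (by norm_num) (by omega)
  linarith

theorem tail_sum_le (m : ℕ) (hm : 1 ≤ m) :
    (∑' n : ℕ, (2 : ℝ) ^ ((1 : ℤ) - ((n : ℤ) + m + 1)) *
        ∑ k ∈ Finset.range (m + 1), (((n + m).choose k : ℝ))) ≤ 2 * m + 1 := by
  have hsummand (n : ℕ) : (2 : ℝ) ^ ((1 : ℤ) - ((n : ℤ) + m + 1)) *
      ∑ k ∈ range (m + 1), ((n + m).choose k : ℝ)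
        = ∑ k ∈ range (m + 1), ((n + m).choose k : ℝ) * (1 / 2) ^ (n + m) := by
    rw [mul_sum, show (1 : ℤ) - ((n : ℤ) + m + 1) = -((n + m : ℕ) : ℤ) by push_cast; ring,
      zpow_neg, zpow_natCast, one_div, inv_pow]
    exact sum_congr rfl fun k _ ↦ mul_comm _ _
  have hsummable (k : ℕ) : Summable fun n : ℕ ↦ ((n + m).choose k : ℝ) * (1 / 2) ^ (n + m) :=
    (hasSum_choose_mul_half_pow k).summable.comp_injective (add_left_injective m)
  rw [tsum_congr hsummand, Summable.tsum_finsetSum fun k _ ↦ hsummable k, sum_range_succ']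
  have hsucc : ∑ k ∈ range m, ∑' n, ((n + m).choose (k + 1) : ℝ) * (1 / 2) ^ (n + m)
      ≤ ∑ k ∈ range m, 2 := sum_le_sum fun k _ ↦ tsum_choose_mul_half_pow_nat_add_le (k + 1) m
  have hzero := tsum_half_pow_nat_add_le_one hm
  simp only [Nat.choose_zero_right, Nat.cast_one, one_mul, sum_const, card_range, nsmul_eq_mul]
    at hsucc ⊢
  linarith
end

section
/- Let p ∈ S^m, t ∈ (0,1], and a₁,…,a_n ∈ S^m with ⟨a_i,p⟩ = t for i ∈ [k+1] and ⟨a_i,p⟩ > t for i ∈ [n]∖[k+1] (1 ≤ k < n). If t·p ∉ cone{a₁,…,a_{k+1}}, then cap(p, arccos t) is not a smallest including cap for (a₁,…,a_n): there exists p_δ ∈ S^m and t_δ > t with ⟨a_i,p_δ⟩ > t_δ for all i ∈ [n]. -/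
/-!
Finitely generated cones are closed: by Carathéodory's theorem for cones such a cone is a finite
union of cones spanned by linearly independent vectors, each the image of a closed orthant under a
closed embedding. Farkas' lemma therefore yields `y` with `⟪p, y⟫ < 0` and `⟪a i, y⟫ ≥ 0` for
every `i` with `⟪a i, p⟫ = t`. For small `δ > 0` the vector `w = p + δ • y` still has
`⟪a i, w⟫ ≥ t` for every `i`, while `‖w‖ < 1`, so normalizing `w` pushes all these inner products
strictly above `t`.
-/

open Set Filter Topology
open scoped RealInnerProductSpace

variable {ι : Type*}

/-- `L '' (supportedOn s ∩ Ici 0)` is the convex cone generated by the `L (Pi.single i 1)`,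
`i ∈ s`. -/
def supportedOn (s : Set ι) : Submodule ℝ (ι → ℝ) :=
  Submodule.pi sᶜ fun _ => ⊥

theorem mem_supportedOn {s : Set ι} {c : ι → ℝ} : c ∈ supportedOn s ↔ c.support ⊆ s := by
  rw [Function.support_subset_iff']
  simp [supportedOn, Submodule.mem_pi]

theorem exists_nonneg_sub_smul_eq_zero [Finite ι] {c g : ι → ℝ} (hc : 0 ≤ c)
    (hg : ∃ i, 0 < g i) : ∃ τ : ℝ, 0 ≤ c - τ • g ∧ ∃ j, 0 < g j ∧ c j - τ * g j = 0 := by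
  classical
  have := Fintype.ofFinite ι
  obtain ⟨i₀, hi₀⟩ := hg
  obtain ⟨j, hj, hmin⟩ := Finset.exists_min_image (Finset.univ.filter fun i => 0 < g i)
    (fun i => c i / g i) ⟨i₀, by simpa using hi₀⟩
  have hgj : 0 < g j := by simpa using hj
  have hτ : 0 ≤ c j / g j := div_nonneg (hc j) hgj.le
  refine ⟨c j / g j, fun i => ?_, j, hgj, by field_simp; ring⟩
  simp only [Pi.zero_apply, Pi.sub_apply, Pi.smul_apply, smul_eq_mul, sub_nonneg]
  rcases le_or_gt (g i) 0 with hgi | hgi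
  · have hci : 0 ≤ c i := hc i
    nlinarith [mul_nonpos_of_nonneg_of_nonpos hτ hgi]
  · exact (le_div_iff₀ hgi).1 (hmin i (by simpa using hgi))

section LinearImage

variable {E : Type*} [AddCommGroup E] [Module ℝ E]

/-- Carathéodory's theorem for cones: disjointness from `ker L` says that the generators
`L (Pi.single i 1)`, `i ∈ d.support`, are linearly independent. -/
theorem exists_nonneg_map_eq_disjoint_ker [Finite ι] (L : (ι → ℝ) →ₗ[ℝ] E) {c : ι → ℝ}
    (hc : 0 ≤ c) : ∃ d, 0 ≤ d ∧ L d = L c ∧ d.support ⊆ c.support ∧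
      Disjoint (supportedOn d.support) (LinearMap.ker L) := by
  induction hn : c.support.ncard using Nat.strong_induction_on generalizing c with
  | _ n ih =>
  by_cases hker : Disjoint (supportedOn c.support) (LinearMap.ker L)
  · exact ⟨c, hc, rfl, subset_rfl, hker⟩
  obtain ⟨g, hgs, hgL, hpos⟩ :
      ∃ g ∈ supportedOn c.support, g ∈ LinearMap.ker L ∧ ∃ i, 0 < g i := by
    obtain ⟨g, hgs, hgL, hg0⟩ := by simpa [Submodule.disjoint_def] using hker
    obtain ⟨i, hi⟩ := Function.ne_iff.1 hg0
    rcases hi.lt_or_gt with hneg | hpos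
    · exact ⟨-g, neg_mem hgs, neg_mem hgL, i, by simpa using hneg⟩
    · exact ⟨g, hgs, hgL, i, hpos⟩
  obtain ⟨τ, hnonneg, j, hgj, hcj⟩ := exists_nonneg_sub_smul_eq_zero hc hpos
  have hgc := mem_supportedOn.1 hgs
  have hsub : (c - τ • g).support ⊂ c.support := by
    refine ⟨fun i hi => ?_, fun h => h (hgc hgj.ne') (by simpa using hcj)⟩
    by_contra hci
    exact hi (by simp [Function.notMem_support.1 hci,
      Function.notMem_support.1 (mt (@hgc i) hci)])
  obtain ⟨d, hd, hdL, hds, hker⟩ :=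
    ih _ (hn ▸ Set.ncard_lt_ncard hsub (Set.toFinite _)) hnonneg rfl
  refine ⟨d, hd, ?_, hds.trans hsub.subset, hker⟩
  rw [hdL, map_sub, map_smul, LinearMap.mem_ker.1 hgL, smul_zero, sub_zero]

variable [TopologicalSpace E] [IsTopologicalAddGroup E] [ContinuousSMul ℝ E] [T2Space E]

theorem isClosed_image_supportedOn_inter_Ici_of_disjoint [Finite ι] (L : (ι → ℝ) →ₗ[ℝ] E)
    {s : Set ι} (h : Disjoint (supportedOn s) (LinearMap.ker L)) :
    IsClosed (L '' (supportedOn s ∩ Ici 0)) := by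
  have hinj : LinearMap.ker (L ∘ₗ (supportedOn s).subtype) = ⊥ := by
    rwa [LinearMap.ker_comp, ← Submodule.disjoint_iff_comap_eq_bot]
  have := (LinearMap.isClosedEmbedding_of_injective hinj).isClosedMap
    (((↑) : supportedOn s → ι → ℝ) ⁻¹' Ici 0)
    ((isClosed_Ici (a := (0 : ι → ℝ))).preimage continuous_subtype_val)
  rwa [LinearMap.coe_comp, Set.image_comp, Submodule.coe_subtype,
    Set.image_preimage_eq_range_inter, Subtype.range_coe_subtype] at this

theorem isClosed_image_supportedOn_inter_Ici [Finite ι] (L : (ι → ℝ) →ₗ[ℝ] E) (s : Set ι) :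
    IsClosed (L '' (supportedOn s ∩ Ici 0)) := by
  have hunion : L '' (supportedOn s ∩ Ici 0) = ⋃ t ∈ {t | t ⊆ s ∧
      Disjoint (supportedOn t) (LinearMap.ker L)}, L '' (supportedOn t ∩ Ici 0) := by
    apply Subset.antisymm
    · rintro _ ⟨c, ⟨hcs, hc⟩, rfl⟩
      obtain ⟨d, hd, hdL, hds, hker⟩ := exists_nonneg_map_eq_disjoint_ker L hc
      exact mem_biUnion ⟨hds.trans (mem_supportedOn.1 hcs), hker⟩
        ⟨d, ⟨mem_supportedOn.2 subset_rfl, hd⟩, hdL⟩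
    · refine iUnion₂_subset fun t ht => image_mono (inter_subset_inter_left _ fun c hc => ?_)
      exact mem_supportedOn.2 ((mem_supportedOn.1 hc).trans ht.1)
  rw [hunion]
  exact (toFinite _).isClosed_biUnion fun t ht =>
    isClosed_image_supportedOn_inter_Ici_of_disjoint L ht.2

end LinearImage

section InnerProductSpace

variable {E : Type*} [NormedAddCommGroup E] [InnerProductSpace ℝ E]

theorem exists_inner_nonneg_inner_neg_of_notMem_cone [CompleteSpace E] [Fintype ι]
    {v : ι → E} {s : Set ι} {x : E}
    (hx : ¬ ∃ c : ι → ℝ, 0 ≤ c ∧ c.support ⊆ s ∧ x = ∑ i, c i • v i) :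
    ∃ y, (∀ i ∈ s, 0 ≤ ⟪v i, y⟫) ∧ ⟪x, y⟫ < 0 := by
  classical
  let L := Fintype.linearCombination ℝ v
  let C : PointedCone ℝ E :=
    ((supportedOn s : PointedCone ℝ (ι → ℝ)) ⊓ PointedCone.positive ℝ (ι → ℝ)).map L
  have hC : (C : Set E) = L '' (supportedOn s ∩ Ici 0) := by
    ext; simp [C]
  have hCcl : IsClosed (C : Set E) := hC ▸ isClosed_image_supportedOn_inter_Ici L s
  obtain ⟨y, hyC, hxy⟩ := ProperCone.hyperplane_separation' (⟨C, hCcl⟩ : ProperCone ℝ E)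
    (x₀ := x) <| by
      rintro ⟨c, ⟨hcs, hc⟩, rfl⟩
      exact hx ⟨c, hc, mem_supportedOn.1 hcs, Fintype.linearCombination_apply ℝ v c⟩
  refine ⟨y, fun i hi => hyC _ ?_, hxy⟩
  refine ⟨Pi.single i 1, ⟨mem_supportedOn.2 ?_, ?_⟩, by simp [L]⟩
  · simpa [Pi.support_single_of_ne] using hi
  · exact Pi.single_nonneg.2 zero_le_one

theorem eventually_le_inner_add_smul {a p y : E} {t : ℝ}
    (h : t < ⟪a, p⟫ ∨ ⟪a, p⟫ = t ∧ 0 ≤ ⟪a, y⟫) :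
    ∀ᶠ δ in 𝓝[>] (0 : ℝ), t ≤ ⟪a, p + δ • y⟫ := by
  simp_rw [inner_add_right, real_inner_smul_right]
  rcases h with hlt | ⟨heq, hy⟩
  · have hlim : Tendsto (fun δ : ℝ => ⟪a, p⟫ + δ * ⟪a, y⟫) (𝓝 0) (𝓝 ⟪a, p⟫) :=
      (by fun_prop : Continuous fun δ : ℝ => ⟪a, p⟫ + δ * ⟪a, y⟫).tendsto' 0 _ (by simp)
    exact nhdsWithin_le_nhds ((hlim.eventually_const_lt hlt).mono fun _ => le_of_lt)
  · filter_upwards [self_mem_nhdsWithin] with δ hδ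
    rw [heq]
    nlinarith [mem_Ioi.1 hδ]

theorem eventually_norm_add_smul_lt {p y : E} (h : ⟪p, y⟫ < 0) :
    ∀ᶠ δ in 𝓝[>] (0 : ℝ), ‖p + δ • y‖ < ‖p‖ := by
  have hlim : Tendsto (fun δ : ℝ => 2 * ⟪p, y⟫ + δ * ‖y‖ ^ 2) (𝓝 0) (𝓝 (2 * ⟪p, y⟫)) :=
    (by fun_prop : Continuous fun δ : ℝ => 2 * ⟪p, y⟫ + δ * ‖y‖ ^ 2).tendsto' 0 _ (by simp)
  filter_upwards [nhdsWithin_le_nhds (hlim.eventually_lt_const (by linarith : 2 * ⟪p, y⟫ < 0)),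
    self_mem_nhdsWithin] with δ hneg hδ
  rw [← sq_lt_sq₀ (norm_nonneg _) (norm_nonneg _), norm_add_sq_real, real_inner_smul_right,
    norm_smul, mul_pow, Real.norm_eq_abs, sq_abs]
  nlinarith [mem_Ioi.1 hδ]

theorem exists_unit_inner_gt_of_norm_lt_one {a : ι → E} {w : E} {t : ℝ} (ht : 0 < t)
    (hw0 : w ≠ 0) (hw1 : ‖w‖ < 1) (ha : ∀ i, t ≤ ⟪a i, w⟫) :
    ∃ (q : E) (t' : ℝ), ‖q‖ = 1 ∧ t < t' ∧ ∀ i, t' < ⟪a i, q⟫ := by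
  have hw : 0 < ‖w‖ := norm_pos_iff.2 hw0
  have hgap : t < t / ‖w‖ := (lt_div_iff₀ hw).2 (by nlinarith)
  refine ⟨‖w‖⁻¹ • w, (t + t / ‖w‖) / 2, norm_smul_inv_norm hw0, by linarith, fun i => ?_⟩
  have : t / ‖w‖ ≤ ⟪a i, ‖w‖⁻¹ • w⟫ := by
    rw [real_inner_smul_right, ← div_eq_inv_mul]
    exact div_le_div_of_nonneg_right (ha i) hw.le
  linarith

theorem exists_unit_inner_gt_of_inner_neg [Finite ι] {a : ι → E} {p y : E} {t : ℝ}
    (hp : ‖p‖ = 1) (ht : 0 < t) (hpy : ⟪p, y⟫ < 0)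
    (ha : ∀ i, t < ⟪a i, p⟫ ∨ ⟪a i, p⟫ = t ∧ 0 ≤ ⟪a i, y⟫) :
    ∃ (q : E) (t' : ℝ), ‖q‖ = 1 ∧ t < t' ∧ ∀ i, t' < ⟪a i, q⟫ := by
  have hne : ∀ᶠ δ in 𝓝[>] (0 : ℝ), p + δ • y ≠ 0 := by
    refine nhdsWithin_le_nhds (ContinuousAt.eventually_ne (by fun_prop) ?_)
    simpa using norm_ne_zero_iff.1 (hp.trans_ne one_ne_zero)
  obtain ⟨δ, hδ0, hδn, hδa⟩ := (hne.and ((eventually_norm_add_smul_lt hpy).and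
    (eventually_all.2 fun i => eventually_le_inner_add_smul (ha i)))).exists
  exact exists_unit_inner_gt_of_norm_lt_one ht hδ0 (hp ▸ hδn) hδa

end InnerProductSpace

theorem not_sic_of_not_in_cone_general (m n k : ℕ)
    (p : EuclideanSpace ℝ (Fin (m + 1))) (hp : ‖p‖ = 1)
    (t : ℝ) (ht : t ∈ Set.Ioc (0 : ℝ) 1)
    (a : Fin n → EuclideanSpace ℝ (Fin (m + 1)))
    (heq : ∀ i : Fin n, (i : ℕ) < k + 1 → inner ℝ (a i) p = t)
    (hgt : ∀ i : Fin n, k + 1 ≤ (i : ℕ) → t < (inner ℝ (a i) p : ℝ))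
    (hcone : ¬ ∃ c : Fin n → ℝ, (∀ i, 0 ≤ c i) ∧ (∀ i : Fin n, k + 1 ≤ (i : ℕ) → c i = 0) ∧
      t • p = ∑ i, c i • a i) :
    ∃ (q : EuclideanSpace ℝ (Fin (m + 1))) (t' : ℝ), ‖q‖ = 1 ∧ t < t' ∧
      ∀ i, t' < (inner ℝ (a i) q : ℝ) := by
  obtain ⟨y, hy, htpy⟩ := exists_inner_nonneg_inner_neg_of_notMem_cone
    (s := {i : Fin n | (i : ℕ) < k + 1}) (x := t • p) fun ⟨c, hc, hcs, hsum⟩ =>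
      hcone ⟨c, hc, fun i hi => Function.notMem_support.1 fun h => (hcs h).not_ge hi, hsum⟩
  have hpy : ⟪p, y⟫ < 0 := by
    rw [real_inner_smul_left] at htpy
    exact neg_of_mul_neg_right htpy ht.1.le
  refine exists_unit_inner_gt_of_inner_neg hp ht.1 hpy fun i => ?_
  by_cases hi : (i : ℕ) < k + 1
  · exact .inr ⟨heq i hi, hy i hi⟩
  · exact .inl (hgt i (not_lt.1 hi))

theorem not_sic_of_not_in_cone (m n k : ℕ) (hk1 : 1 ≤ k) (hkn : k < n)
    (p : EuclideanSpace ℝ (Fin (m + 1))) (hp : ‖p‖ = 1)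
    (t : ℝ) (ht : t ∈ Set.Ioc (0 : ℝ) 1)
    (a : Fin n → EuclideanSpace ℝ (Fin (m + 1))) (ha : ∀ i, ‖a i‖ = 1)
    (heq : ∀ i : Fin n, (i : ℕ) < k + 1 → inner ℝ (a i) p = t)
    (hgt : ∀ i : Fin n, k + 1 ≤ (i : ℕ) → t < (inner ℝ (a i) p : ℝ))
    (hcone : ¬ ∃ c : Fin n → ℝ, (∀ i, 0 ≤ c i) ∧ (∀ i : Fin n, k + 1 ≤ (i : ℕ) → c i = 0) ∧
      t • p = ∑ i, c i • a i) :
    ∃ (q : EuclideanSpace ℝ (Fin (m + 1))) (t' : ℝ), ‖q‖ = 1 ∧ t < t' ∧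
      ∀ i, t' < (inner ℝ (a i) q : ℝ) :=
  not_sic_of_not_in_cone_general m n k p hp t ht a heq hgt hcone
end
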